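/- Let d ≥ 1, 0 < s < 1, β ∈ [0,1], α > 0, and g ∈ L²(𝕋^d;ℂ) with ĝ_0 = 0. Let u be the solution of the fractional denoising problem with data g, i.e. û_k = α(|k|^{2(s+β)} + α)^{−1} ĝ_k for k ≠ 0 and û_0 = 0. Let n ≥ 2 be even, let g_n ∈ S_n with (g_n)∧_0 = 0, and let u_n = (2π)^{−d} Σ_{k∈Z_n^d, k≠0} α(|k|^{2(s+β)} + α)^{−1} (g_n)∧_k φ^k be the solution of the discrete problem with data g_n. Then |u − u_n|_s² + (α/2)|u − u_n|_{−β}² ≤ (α/2)|g − g_n|_{−β}². -/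

import Mathlib

open MeasureTheory Real

noncomputable section

/-- Fundamental domain `(0, 2π]^d` of the `d`-dimensional torus `𝕋^d = (ℝ/2πℤ)^d`. -/
def Box (d : ℕ) : Set (Fin d → ℝ) := Set.univ.pi fun _ => Set.Ioc 0 (2 * π)

/-- Lebesgue measure on the torus, realized on the fundamental domain. -/
def tMeas (d : ℕ) : Measure (Fin d → ℝ) := MeasureTheory.volume.restrict (Box d)

/-- The character `φ^k(x) = e^{i k·x}`. -/
def phi (d : ℕ) (k : Fin d → ℤ) (x : Fin d → ℝ) : ℂ :=
  Complex.exp (Complex.I * ∑ i, (k i : ℂ) * (x i : ℂ))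

/-- Fourier coefficient `v̂_k = ∫_{𝕋^d} v(x) e^{-i k·x} dx`. -/
def fc (d : ℕ) (v : (Fin d → ℝ) → ℂ) (k : Fin d → ℤ) : ℂ :=
  ∫ x, v x * Complex.exp (-(Complex.I * ∑ i, (k i : ℂ) * (x i : ℂ))) ∂(tMeas d)

/-- Euclidean norm `|k|` of a frequency vector `k ∈ ℤ^d`. -/
def knorm (d : ℕ) (k : Fin d → ℤ) : ℝ := Real.sqrt (∑ i, ((k i : ℝ)) ^ 2)

/-- Summand family `|k|^{2μ}|c_k|²`, `k ≠ 0`, of the squared Sobolev seminorm of a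
coefficient sequence. -/
def sobFamC (d : ℕ) (μ : ℝ) (c : (Fin d → ℤ) → ℂ) :
    {k : Fin d → ℤ // k ≠ 0} → ℝ :=
  fun k => knorm d k.1 ^ (2 * μ) * ‖c k.1‖ ^ 2

/-- Summand family of the squared Sobolev seminorm `|v|_μ²`. -/
def sobFam (d : ℕ) (μ : ℝ) (v : (Fin d → ℝ) → ℂ) := sobFamC d μ (fc d v)

/-- Sobolev seminorm of order `μ` of a coefficient sequence. -/
def sobNormC (d : ℕ) (μ : ℝ) (c : (Fin d → ℤ) → ℂ) : ℝ :=
  Real.sqrt (∑' k, sobFamC d μ c k)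

/-- Sobolev seminorm `|v|_μ = (Σ_{k≠0} |k|^{2μ}|v̂_k|²)^{1/2}`. -/
def sobNorm (d : ℕ) (μ : ℝ) (v : (Fin d → ℝ) → ℂ) : ℝ := sobNormC d μ (fc d v)

/-- Frequency set `Z_n^d = {k : -n/2 ≤ k_i ≤ n/2 - 1}`. -/
def Znd (d n : ℕ) : Finset (Fin d → ℤ) :=
  Fintype.piFinset fun _ => Finset.Icc (-((n : ℤ) / 2)) ((n : ℤ) / 2 - 1)

/-- Space `S_n` of trigonometric polynomials with frequencies in `Z_n^d`. -/
def Sn (d n : ℕ) : Set ((Fin d → ℝ) → ℂ) :=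
  {v | ∃ c : (Fin d → ℤ) → ℂ, v = fun x => ∑ k ∈ Znd d n, c k * phi d k x}

/-- L² projection `P_n v = (2π)^{-d} Σ_{k ∈ Z_n^d} v̂_k φ^k`. -/
def Pn (d n : ℕ) (v : (Fin d → ℝ) → ℂ) : (Fin d → ℝ) → ℂ :=
  fun x => (((2 * π) ^ d : ℝ))⁻¹ • ∑ k ∈ Znd d n, fc d v k * phi d k x

/-- Index set `{0,…,n-1}^d` of the interpolation grid. -/
def gridIdx (d n : ℕ) : Finset (Fin d → ℕ) := Fintype.piFinset fun _ => Finset.range n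

/-- Grid point `x_j = (2π/n) j`. -/
def gridPt (d n : ℕ) (j : Fin d → ℕ) : Fin d → ℝ := fun i => 2 * π / (n : ℝ) * (j i : ℝ)

/-- Trigonometric polynomial with discrete Fourier coefficients
`c_k = n^{-d} Σ_j V_j e^{-i k·x_j}` built from grid values `V`. -/
def interpOfValues (d n : ℕ) (V : (Fin d → ℕ) → ℂ) : (Fin d → ℝ) → ℂ :=
  fun x => ∑ k ∈ Znd d n,
    (((n : ℂ) ^ d)⁻¹ * ∑ j ∈ gridIdx d n,
        V j * Complex.exp (-(Complex.I * ∑ i, (k i : ℂ) * (gridPt d n j i : ℂ)))) * phi d k x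

/-- Trigonometric interpolant `I_n v`. -/
def Interp (d n : ℕ) (v : (Fin d → ℝ) → ℂ) : (Fin d → ℝ) → ℂ :=
  interpOfValues d n fun j => v (gridPt d n j)

/-- Fractional Laplacian `(−Δ)^σ` realized on trigonometric polynomials in `S_n`. -/
def fLap (d n : ℕ) (σ : ℝ) (v : (Fin d → ℝ) → ℂ) : (Fin d → ℝ) → ℂ :=
  fun x => (((2 * π) ^ d : ℝ))⁻¹ •
    ∑ k ∈ (Znd d n).erase 0, (knorm d k ^ (2 * σ)) • (fc d v k * phi d k x)

/-- Membership in `H^μ(𝕋^d;ℂ)`: `v ∈ L²` with `|v|_μ < ∞`. -/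
def memH (d : ℕ) (μ : ℝ) (v : (Fin d → ℝ) → ℂ) : Prop :=
  MemLp v 2 (tMeas d) ∧ Summable (sobFam d μ v)

/-- Membership in `Ḣ^μ(𝕋^d;ℂ)`: additionally `v̂_0 = 0`. -/
def memHdot (d : ℕ) (μ : ℝ) (v : (Fin d → ℝ) → ℂ) : Prop :=
  memH d μ v ∧ fc d v 0 = 0

/-- Solution of a discrete spectral problem: given a Fourier multiplier `m` and data
`g`, returns `(2π)^{-d} Σ_{k ∈ Z_n^d, k ≠ 0} m(k) ĝ_k φ^k`. -/
def discSol (d n : ℕ) (m : (Fin d → ℤ) → ℝ) (g : (Fin d → ℝ) → ℂ) : (Fin d → ℝ) → ℂ :=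
  fun x => (((2 * π) ^ d : ℝ))⁻¹ • ∑ k ∈ (Znd d n).erase 0, m k • (fc d g k * phi d k x)

/-! For `k ≠ 0` the error `u - u_n` has Fourier coefficients `m_k (g - g_n)^_k` with
`m_k = α / (|k|^{2(s+β)} + α)`: on `Z_n^d` by definition of `u_n`, off `Z_n^d` because `g_n`
has no frequencies there. With `T = |k|^{2(s+β)}` and `|k|^{2s} = T |k|^{-2β}`, the estimate then
holds summand by summand, as `m_k² (T + α/2) ≤ α/2` amounts to `0 ≤ T²`. The right-hand side is
finite by Bessel's inequality for the orthogonal characters `φ^k`, since `|k|^{-2β} ≤ 1`. -/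

lemma integral_exp_int_mul_I_Ioc (m : ℤ) :
    ∫ t in Set.Ioc (0 : ℝ) (2 * π), Complex.exp (Complex.I * m * t) =
      if m = 0 then ((2 * π : ℝ) : ℂ) else 0 := by
  rw [← intervalIntegral.integral_of_le (by positivity)]
  split_ifs with hm
  · simp [hm]
  · have hc : Complex.I * m ≠ 0 := by simp [hm]
    have hperiod : Complex.exp (Complex.I * m * (2 * π : ℝ)) = 1 := by
      rw [← Complex.exp_int_mul_two_pi_mul_I m]
      push_cast
      ring_nf
    rw [integral_exp_mul_complex hc, hperiod]
    simp

lemma tMeas_eq_pi (d : ℕ) :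
    tMeas d = Measure.pi fun _ => volume.restrict (Set.Ioc (0 : ℝ) (2 * π)) := by
  rw [tMeas, Box, volume_pi, Measure.restrict_pi_pi]

instance (d : ℕ) : IsFiniteMeasure (tMeas d) := by
  rw [tMeas_eq_pi]
  infer_instance

lemma phi_eq_prod (d : ℕ) (k : Fin d → ℤ) (x : Fin d → ℝ) :
    phi d k x = ∏ i, Complex.exp (Complex.I * k i * x i) := by
  rw [phi, Finset.mul_sum, Complex.exp_sum]
  simp only [mul_assoc]

lemma integral_phi (d : ℕ) (k : Fin d → ℤ) :
    ∫ x, phi d k x ∂tMeas d = if k = 0 then (((2 * π) ^ d : ℝ) : ℂ) else 0 := by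
  simp_rw [tMeas_eq_pi, phi_eq_prod]
  rw [integral_fintype_prod_eq_prod (fun i (t : ℝ) => Complex.exp (Complex.I * k i * t))]
  simp_rw [integral_exp_int_mul_I_Ioc]
  split_ifs with hk
  · simp [hk]
  · obtain ⟨i, hi⟩ := Function.ne_iff.mp hk
    exact Finset.prod_eq_zero (Finset.mem_univ i) (if_neg hi)

lemma continuous_phi (d : ℕ) (k : Fin d → ℤ) : Continuous (phi d k) := by
  unfold phi
  fun_prop

lemma norm_phi (d : ℕ) (k : Fin d → ℤ) (x : Fin d → ℝ) : ‖phi d k x‖ = 1 := by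
  rw [phi_eq_prod, norm_prod]
  refine Finset.prod_eq_one fun i _ => ?_
  have hreal : Complex.I * k i * x i = ((k i * x i : ℝ) : ℂ) * Complex.I := by push_cast; ring
  rw [hreal, Complex.norm_exp_ofReal_mul_I]

lemma memLp_phi (d : ℕ) (k : Fin d → ℤ) : MemLp (phi d k) 2 (tMeas d) :=
  MemLp.of_bound (continuous_phi d k).aestronglyMeasurable 1
    (.of_forall fun x => (norm_phi d k x).le)

lemma conj_phi (d : ℕ) (k : Fin d → ℤ) (x : Fin d → ℝ) :
    starRingEnd ℂ (phi d k x) = Complex.exp (-(Complex.I * ∑ i, (k i : ℂ) * (x i : ℂ))) := by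
  rw [phi, ← Complex.exp_conj]
  simp [map_sum]

lemma phi_mul_conj_phi (d : ℕ) (k l : Fin d → ℤ) (x : Fin d → ℝ) :
    phi d k x * starRingEnd ℂ (phi d l x) = phi d (k - l) x := by
  rw [conj_phi, phi, phi, ← Complex.exp_add]
  congr 1
  simp only [Pi.sub_apply, Int.cast_sub, sub_mul, Finset.sum_sub_distrib]
  ring

lemma fc_eq_integral_mul_conj_phi (d : ℕ) (v : (Fin d → ℝ) → ℂ) (k : Fin d → ℤ) :
    fc d v k = ∫ x, v x * starRingEnd ℂ (phi d k x) ∂tMeas d := by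
  simp_rw [fc, conj_phi]

lemma integrable_mul_conj_phi (d : ℕ) {v : (Fin d → ℝ) → ℂ} (hv : MemLp v 2 (tMeas d))
    (k : Fin d → ℤ) : Integrable (fun x => v x * starRingEnd ℂ (phi d k x)) (tMeas d) := by
  refine (hv.integrable one_le_two).mul_bdd
    (continuous_phi d k).star.aestronglyMeasurable (c := 1) (.of_forall fun x => ?_)
  simp [norm_phi]

lemma fc_sub (d : ℕ) {v w : (Fin d → ℝ) → ℂ} (hv : MemLp v 2 (tMeas d))
    (hw : MemLp w 2 (tMeas d)) (k : Fin d → ℤ) :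
    fc d (fun x => v x - w x) k = fc d v k - fc d w k := by
  simp_rw [fc_eq_integral_mul_conj_phi, sub_mul]
  exact integral_sub (integrable_mul_conj_phi d hv k) (integrable_mul_conj_phi d hw k)

lemma fc_phi (d : ℕ) (k l : Fin d → ℤ) :
    fc d (phi d k) l = if k = l then (((2 * π) ^ d : ℝ) : ℂ) else 0 := by
  simp_rw [fc_eq_integral_mul_conj_phi, phi_mul_conj_phi, integral_phi, sub_eq_zero]

def trigPoly (d : ℕ) (F : Finset (Fin d → ℤ)) (a : (Fin d → ℤ) → ℂ) : (Fin d → ℝ) → ℂ :=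
  fun x => ∑ k ∈ F, a k * phi d k x

lemma memLp_trigPoly (d : ℕ) (F : Finset (Fin d → ℤ)) (a : (Fin d → ℤ) → ℂ) :
    MemLp (trigPoly d F a) 2 (tMeas d) := by
  have h := memLp_finsetSum' F fun k _ => (memLp_phi d k).const_mul (a k)
  convert h using 1
  ext x
  simp [trigPoly]

lemma fc_trigPoly (d : ℕ) (F : Finset (Fin d → ℤ)) (a : (Fin d → ℤ) → ℂ) (l : Fin d → ℤ) :
    fc d (trigPoly d F a) l = if l ∈ F then (((2 * π) ^ d : ℝ) : ℂ) * a l else 0 := by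
  have hint : ∀ k ∈ F, Integrable (fun x => a k * phi d (k - l) x) (tMeas d) := fun k _ =>
    ((memLp_phi d (k - l)).integrable one_le_two).const_mul (a k)
  simp_rw [fc_eq_integral_mul_conj_phi, trigPoly, Finset.sum_mul, mul_assoc, phi_mul_conj_phi]
  rw [integral_finsetSum F hint]
  simp_rw [integral_const_mul, integral_phi, sub_eq_zero, mul_ite, mul_zero,
    Finset.sum_ite_eq', mul_comm]

lemma fc_eq_zero_of_mem_Sn {d n : ℕ} {v : (Fin d → ℝ) → ℂ} (hv : v ∈ Sn d n)
    {l : Fin d → ℤ} (hl : l ∉ Znd d n) : fc d v l = 0 := by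
  obtain ⟨c, rfl⟩ := hv
  exact (fc_trigPoly d _ c l).trans (if_neg hl)

lemma memLp_of_mem_Sn {d n : ℕ} {v : (Fin d → ℝ) → ℂ} (hv : v ∈ Sn d n) :
    MemLp v 2 (tMeas d) := by
  obtain ⟨c, rfl⟩ := hv
  exact memLp_trigPoly d _ c

lemma discSol_eq_trigPoly (d n : ℕ) (m : (Fin d → ℤ) → ℝ) (g : (Fin d → ℝ) → ℂ) :
    discSol d n m g =
      trigPoly d ((Znd d n).erase 0) fun k => (((2 * π) ^ d)⁻¹ * m k : ℝ) * fc d g k := by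
  ext x
  simp only [discSol, trigPoly, Finset.smul_sum, Complex.real_smul]
  push_cast
  refine Finset.sum_congr rfl fun k _ => by ring

lemma fc_discSol (d n : ℕ) (m : (Fin d → ℤ) → ℝ) (g : (Fin d → ℝ) → ℂ) (l : Fin d → ℤ) :
    fc d (discSol d n m g) l = if l ∈ (Znd d n).erase 0 then (m l : ℂ) * fc d g l else 0 := by
  have h2pi : (((2 * π) ^ d : ℝ) : ℂ) ≠ 0 := by exact_mod_cast (by positivity : (2 * π) ^ d ≠ 0)
  rw [discSol_eq_trigPoly, fc_trigPoly]
  push_cast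
  field_simp

lemma memLp_discSol (d n : ℕ) (m : (Fin d → ℤ) → ℝ) (g : (Fin d → ℝ) → ℂ) :
    MemLp (discSol d n m g) 2 (tMeas d) := by
  rw [discSol_eq_trigPoly]
  exact memLp_trigPoly d _ _

lemma inner_toLp_phi (d : ℕ) {v : (Fin d → ℝ) → ℂ} (hv : MemLp v 2 (tMeas d))
    (k : Fin d → ℤ) : inner ℂ ((memLp_phi d k).toLp (phi d k)) (hv.toLp v) = fc d v k := by
  rw [L2.inner_def, fc_eq_integral_mul_conj_phi]
  refine integral_congr_ae ?_
  filter_upwards [(memLp_phi d k).coeFn_toLp, hv.coeFn_toLp] with x hphi hvx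
  rw [hphi, hvx, RCLike.inner_apply, mul_comm]

def charLp (d : ℕ) (k : Fin d → ℤ) : Lp ℂ 2 (tMeas d) :=
  (((√((2 * π) ^ d))⁻¹ : ℝ) : ℂ) • (memLp_phi d k).toLp (phi d k)

lemma inner_charLp (d : ℕ) {v : (Fin d → ℝ) → ℂ} (hv : MemLp v 2 (tMeas d))
    (k : Fin d → ℤ) : inner ℂ (charLp d k) (hv.toLp v) = ((√((2 * π) ^ d))⁻¹ : ℝ) * fc d v k := by
  rw [charLp, inner_smul_left, inner_toLp_phi, Complex.conj_ofReal]

lemma orthonormal_charLp (d : ℕ) : Orthonormal ℂ (charLp d) := by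
  rw [orthonormal_iff_ite]
  intro k l
  have h2pi : (0 : ℝ) ≤ (2 * π) ^ d := by positivity
  rw [charLp, charLp, inner_smul_left, inner_smul_right, inner_toLp_phi, fc_phi,
    Complex.conj_ofReal]
  split_ifs with hlk hkl hkl
  · rw [← mul_assoc, ← Complex.ofReal_mul, ← Complex.ofReal_mul, ← mul_inv,
      Real.mul_self_sqrt h2pi, inv_mul_cancel₀ (by positivity), Complex.ofReal_one]
  · exact absurd hlk.symm hkl
  · exact absurd hkl.symm hlk
  · simp

lemma summable_norm_fc_sq (d : ℕ) {v : (Fin d → ℝ) → ℂ} (hv : MemLp v 2 (tMeas d)) :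
    Summable fun k => ‖fc d v k‖ ^ 2 := by
  have h := (orthonormal_charLp d).inner_products_summable (hv.toLp v)
  have hnorm : ∀ k, ‖inner ℂ (charLp d k) (hv.toLp v)‖ ^ 2 =
      (√((2 * π) ^ d))⁻¹ ^ 2 * ‖fc d v k‖ ^ 2 := fun k => by
    rw [inner_charLp d hv, norm_mul, mul_pow, Complex.norm_real,
      Real.norm_of_nonneg (by positivity)]
  have h2pi : (0 : ℝ) < (2 * π) ^ d := by positivity
  simp only [hnorm] at h
  exact (summable_mul_left_iff (pow_ne_zero 2 (inv_ne_zero (Real.sqrt_pos.mpr h2pi).ne'))).mp h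

lemma one_le_knorm {d : ℕ} {k : Fin d → ℤ} (hk : k ≠ 0) : 1 ≤ knorm d k := by
  obtain ⟨i, hi⟩ := Function.ne_iff.mp hk
  have hki : (1 : ℝ) ≤ (k i : ℝ) ^ 2 := by
    rw [one_le_sq_iff_one_le_abs]
    exact_mod_cast Int.one_le_abs hi
  rw [knorm, Real.one_le_sqrt]
  exact hki.trans (Finset.single_le_sum (fun j _ => sq_nonneg (k j : ℝ)) (Finset.mem_univ i))

lemma sobFamC_nonneg (d : ℕ) (μ : ℝ) (c : (Fin d → ℤ) → ℂ) (k : {k : Fin d → ℤ // k ≠ 0}) :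
    0 ≤ sobFamC d μ c k :=
  mul_nonneg (Real.rpow_nonneg (Real.sqrt_nonneg _) _) (sq_nonneg _)

lemma sq_sobNormC (d : ℕ) (μ : ℝ) (c : (Fin d → ℤ) → ℂ) :
    sobNormC d μ c ^ 2 = ∑' k, sobFamC d μ c k :=
  Real.sq_sqrt (tsum_nonneg (sobFamC_nonneg d μ c))

lemma summable_sobFamC_of_nonpos {d : ℕ} {μ : ℝ} (hμ : μ ≤ 0) {c : (Fin d → ℤ) → ℂ}
    (hc : Summable fun k => ‖c k‖ ^ 2) : Summable (sobFamC d μ c) :=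
  (hc.subtype _).of_nonneg_of_le (sobFamC_nonneg d μ c) fun k =>
    mul_le_of_le_one_left (sq_nonneg _)
      (Real.rpow_le_one_of_one_le_of_nonpos (one_le_knorm k.2) (by linarith))

lemma sq_div_add_mul_add_half_le {α T : ℝ} (ha : 0 < α) (hT : 0 ≤ T) :
    (α / (T + α)) ^ 2 * (T + α / 2) ≤ α / 2 := by
  rw [div_pow, div_mul_eq_mul_div, div_le_iff₀ (by positivity)]
  nlinarith [sq_nonneg T]

section Denoising

variable {d : ℕ} {s β α : ℝ} {c c' : (Fin d → ℤ) → ℂ}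

lemma sobFamC_add_le_of_coeff_eq (ha : 0 < α)
    (hc : ∀ k, k ≠ 0 → c k = ((α / (knorm d k ^ (2 * (s + β)) + α) : ℝ) : ℂ) * c' k)
    (k : {k : Fin d → ℤ // k ≠ 0}) :
    sobFamC d s c k + α / 2 * sobFamC d (-β) c k ≤ α / 2 * sobFamC d (-β) c' k := by
  obtain ⟨k, hk⟩ := k
  have hK : 0 < knorm d k := zero_lt_one.trans_le (one_le_knorm hk)
  set T := knorm d k ^ (2 * (s + β))
  set w := knorm d k ^ (2 * -β)
  have hT : 0 ≤ T := Real.rpow_nonneg hK.le _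
  have hw : 0 ≤ w := Real.rpow_nonneg hK.le _
  have hsplit : knorm d k ^ (2 * s) = T * w := by
    rw [← Real.rpow_add hK]
    ring_nf
  have hnorm : ‖c k‖ ^ 2 = (α / (T + α)) ^ 2 * ‖c' k‖ ^ 2 := by
    rw [hc k hk, norm_mul, mul_pow, Complex.norm_real, Real.norm_eq_abs, sq_abs]
  have hkey := mul_le_mul_of_nonneg_left (sq_div_add_mul_add_half_le ha hT)
    (mul_nonneg hw (sq_nonneg ‖c' k‖))
  simp only [sobFamC, hsplit, hnorm]
  linarith

theorem sq_sobNormC_add_le_of_coeff_eq (ha : 0 < α)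
    (hc : ∀ k, k ≠ 0 → c k = ((α / (knorm d k ^ (2 * (s + β)) + α) : ℝ) : ℂ) * c' k)
    (hc' : Summable (sobFamC d (-β) c')) :
    sobNormC d s c ^ 2 + α / 2 * sobNormC d (-β) c ^ 2 ≤ α / 2 * sobNormC d (-β) c' ^ 2 := by
  have hle := sobFamC_add_le_of_coeff_eq ha hc
  have hrhs := hc'.mul_left (α / 2)
  have hβ_nonneg : ∀ k, 0 ≤ α / 2 * sobFamC d (-β) c k := fun k =>
    mul_nonneg (by positivity) (sobFamC_nonneg d (-β) c k)
  have hs : Summable (sobFamC d s c) := hrhs.of_nonneg_of_le (sobFamC_nonneg d s c) fun k =>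
    (le_add_of_nonneg_right (hβ_nonneg k)).trans (hle k)
  have hβ : Summable fun k => α / 2 * sobFamC d (-β) c k := hrhs.of_nonneg_of_le hβ_nonneg fun k =>
    (le_add_of_nonneg_left (sobFamC_nonneg d s c k)).trans (hle k)
  rw [sq_sobNormC, sq_sobNormC, sq_sobNormC, ← tsum_mul_left, ← tsum_mul_left,
    ← hs.tsum_add hβ]
  exact (hs.add hβ).tsum_le_tsum hle hrhs

end Denoising

lemma fc_sub_discSol {d n : ℕ} {m : (Fin d → ℤ) → ℝ} {g u gn : (Fin d → ℝ) → ℂ}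
    (hg : MemLp g 2 (tMeas d)) (hu : MemLp u 2 (tMeas d))
    (huk : ∀ k, k ≠ 0 → fc d u k = (m k : ℂ) * fc d g k) (hgn : gn ∈ Sn d n)
    {k : Fin d → ℤ} (hk : k ≠ 0) :
    fc d (fun x => u x - discSol d n m gn x) k = (m k : ℂ) * fc d (fun x => g x - gn x) k := by
  rw [fc_sub d hu (memLp_discSol d n m gn), fc_sub d hg (memLp_of_mem_Sn hgn), fc_discSol,
    huk k hk]
  by_cases hmem : k ∈ Znd d n
  · rw [if_pos (Finset.mem_erase.mpr ⟨hk, hmem⟩)]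
    ring
  · rw [if_neg (fun h => hmem (Finset.mem_of_mem_erase h)), fc_eq_zero_of_mem_Sn hgn hmem]
    ring

theorem denoising_abstract_error_general (d n : ℕ)
    (s β α : ℝ) (hb0 : 0 ≤ β) (ha : 0 < α)
    (g : (Fin d → ℝ) → ℂ) (hg : MemLp g 2 (tMeas d))
    (u : (Fin d → ℝ) → ℂ) (hu : MemLp u 2 (tMeas d))
    (huk : ∀ k : Fin d → ℤ, k ≠ 0 →
      fc d u k = ((α / (knorm d k ^ (2 * (s + β)) + α) : ℝ) : ℂ) * fc d g k)
    (gn : (Fin d → ℝ) → ℂ) (hgn : gn ∈ Sn d n) :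
    (sobNorm d s (fun x =>
        u x - discSol d n (fun k => α / (knorm d k ^ (2 * (s + β)) + α)) gn x)) ^ 2 +
      (α / 2) * (sobNorm d (-β) (fun x =>
        u x - discSol d n (fun k => α / (knorm d k ^ (2 * (s + β)) + α)) gn x)) ^ 2 ≤
      (α / 2) * (sobNorm d (-β) (fun x => g x - gn x)) ^ 2 := by
  have hδ : MemLp (fun x => g x - gn x) 2 (tMeas d) := hg.sub (memLp_of_mem_Sn hgn)
  exact sq_sobNormC_add_le_of_coeff_eq ha (fun k hk => fc_sub_discSol hg hu huk hgn hk)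
    (summable_sobFamC_of_nonpos (neg_nonpos.mpr hb0) (summable_norm_fc_sq d hδ))

/-- abstract error estimate
`|u - u_n|_s² + (α/2)|u - u_n|_{-β}² ≤ (α/2)|g - g_n|_{-β}²` for the spectral
approximation of the fractional denoising problem. -/
theorem denoising_abstract_error (d n : ℕ) (hd : 1 ≤ d) (hn : 2 ≤ n) (hne : Even n)
    (s β α : ℝ) (hs0 : 0 < s) (hs1 : s < 1) (hb0 : 0 ≤ β) (hb1 : β ≤ 1) (ha : 0 < α)
    (g : (Fin d → ℝ) → ℂ) (hg : MemLp g 2 (tMeas d)) (hg0 : fc d g 0 = 0)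
    (u : (Fin d → ℝ) → ℂ) (hu : MemLp u 2 (tMeas d)) (hu0 : fc d u 0 = 0)
    (huk : ∀ k : Fin d → ℤ, k ≠ 0 →
      fc d u k = ((α / (knorm d k ^ (2 * (s + β)) + α) : ℝ) : ℂ) * fc d g k)
    (gn : (Fin d → ℝ) → ℂ) (hgn : gn ∈ Sn d n) (hgn0 : fc d gn 0 = 0) :
    (sobNorm d s (fun x =>
        u x - discSol d n (fun k => α / (knorm d k ^ (2 * (s + β)) + α)) gn x)) ^ 2 +
      (α / 2) * (sobNorm d (-β) (fun x =>
        u x - discSol d n (fun k => α / (knorm d k ^ (2 * (s + β)) + α)) gn x)) ^ 2 ≤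
      (α / 2) * (sobNorm d (-β) (fun x => g x - gn x)) ^ 2 :=
  denoising_abstract_error_general d n s β α hb0 ha g hg u hu huk gn hgn

end
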